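/- arXiv:1507.02030 — 7 statements merged into one kernel-verified Lean document; each statement's English description precedes it below -/
import Mathlib

section
/- Let f : ℝ^d → ℝ be differentiable, let ε, κ > 0, and let x, x* ∈ ℝ^d. If f is (ε,κ,x*)-SLQC at x, ∇f(x) ≠ 0, and f(x) − f(x*) > ε, then ⟨∇f(x)/‖∇f(x)‖, x − x*⟩ ≥ ε/κ; consequently, for η = ε/κ, the normalized-gradient step satisfies ‖x − η·∇f(x)/‖∇f(x)‖ − x*‖² ≤ ‖x − x*‖² − ε²/κ². -/
open RealInnerProductSpace

/-! Testing the half-space condition at the point `z + r • u` of the ball, where `u` is the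
normalized gradient, gives `r ≤ ⟪u, x - z⟫`; expanding the square of the step then shows that
each normalized step of length `r` brings `x` closer to `z` in squared distance by `r ^ 2`. -/

section

variable {E : Type*} [NormedAddCommGroup E] [InnerProductSpace ℝ E]

theorem le_inner_normalize_of_inner_nonpos_on_closedBall {g : E} (hg : g ≠ 0) {x z : E}
    {r : ℝ} (hr : 0 ≤ r) (h : ∀ y ∈ Metric.closedBall z r, ⟪g, y - x⟫ ≤ 0) :
    r ≤ ⟪‖g‖⁻¹ • g, x - z⟫ := by
  have hg_pos : 0 < ‖g‖ := norm_pos_iff.mpr hg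
  have hu : ‖‖g‖⁻¹ • g‖ = 1 := norm_smul_inv_norm hg
  have hmem : z + r • (‖g‖⁻¹ • g) ∈ Metric.closedBall z r := by
    rw [mem_closedBall_iff_norm, add_sub_cancel_left, norm_smul, hu, mul_one,
      Real.norm_of_nonneg hr]
  have hexpand : ⟪g, z + r • (‖g‖⁻¹ • g) - x⟫ = r * ‖g‖ - ⟪g, x - z⟫ := by
    rw [add_sub_right_comm, inner_add_right, real_inner_smul_right, real_inner_smul_right,
      real_inner_self_eq_norm_sq, ← neg_sub x z, inner_neg_right]
    field_simp
    ring
  have hstep : r * ‖g‖ ≤ ⟪g, x - z⟫ := by linarith [h _ hmem]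
  rw [real_inner_smul_left, le_inv_mul_iff₀ hg_pos, mul_comm]
  exact hstep

theorem norm_sub_smul_sub_sq_le {u x z : E} (hu : ‖u‖ = 1) {r : ℝ} (hr : 0 ≤ r)
    (h : r ≤ ⟪u, x - z⟫) :
    ‖x - r • u - z‖ ^ 2 ≤ ‖x - z‖ ^ 2 - r ^ 2 := by
  have hexpand : ‖x - r • u - z‖ ^ 2 = ‖x - z‖ ^ 2 - 2 * r * ⟪u, x - z⟫ + r ^ 2 := by
    rw [sub_right_comm, norm_sub_sq_real, real_inner_smul_right, norm_smul, hu,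
      Real.norm_of_nonneg hr, real_inner_comm]
    ring
  rw [hexpand]
  nlinarith

end

theorem stmt_1_general {d : ℕ} (ε κ : ℝ) (hε : 0 < ε) (hκ : 0 < κ)
    (f : EuclideanSpace ℝ (Fin d) → ℝ)
    (x xstar : EuclideanSpace ℝ (Fin d))
    (hSLQC : f x - f xstar ≤ ε ∨
      (gradient f x ≠ 0 ∧
        ∀ y ∈ Metric.closedBall xstar (ε / κ), ⟪gradient f x, y - x⟫ ≤ 0))
    (hgap : f x - f xstar > ε)
    (η : ℝ) (hη : η = ε / κ) :
    ⟪‖gradient f x‖⁻¹ • gradient f x, x - xstar⟫ ≥ ε / κ ∧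
      ‖x - η • (‖gradient f x‖⁻¹ • gradient f x) - xstar‖ ^ 2 ≤
        ‖x - xstar‖ ^ 2 - ε ^ 2 / κ ^ 2 := by
  obtain ⟨hgrad, hhalf⟩ := hSLQC.resolve_left hgap.not_ge
  have hr : 0 ≤ ε / κ := (div_pos hε hκ).le
  have hdescent := le_inner_normalize_of_inner_nonpos_on_closedBall hgrad hr hhalf
  refine ⟨hdescent, ?_⟩
  rw [hη, ← div_pow]
  exact norm_sub_smul_sub_sq_le (norm_smul_inv_norm hgrad) hr hdescent

theorem stmt_1 {d : ℕ} (ε κ : ℝ) (hε : 0 < ε) (hκ : 0 < κ)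
    (f : EuclideanSpace ℝ (Fin d) → ℝ) (hf : Differentiable ℝ f)
    (x xstar : EuclideanSpace ℝ (Fin d))
    (hSLQC : f x - f xstar ≤ ε ∨
      (gradient f x ≠ 0 ∧
        ∀ y ∈ Metric.closedBall xstar (ε / κ), ⟪gradient f x, y - x⟫ ≤ 0))
    (hgrad : gradient f x ≠ 0)
    (hgap : f x - f xstar > ε)
    (η : ℝ) (hη : η = ε / κ) :
    ⟪‖gradient f x‖⁻¹ • gradient f x, x - xstar⟫ ≥ ε / κ ∧
      ‖x - η • (‖gradient f x‖⁻¹ • gradient f x) - xstar‖ ^ 2 ≤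
        ‖x - xstar‖ ^ 2 - ε ^ 2 / κ ^ 2 :=
  stmt_1_general ε κ hε hκ f x xstar hSLQC hgap η hη
end

section
/- Let W > 0, let x_1, …, x_m be points in the closed unit ball of ℝ^d, let w* ∈ ℝ^d with ‖w*‖ ≤ W, and set y_i = σ(⟨w*, x_i⟩) for i = 1,…,m, where σ(z) = 1/(1 + e^{−z}). Define the empirical error err_m(w) = (1/m)·Σ_{i=1}^m (y_i − σ(⟨w, x_i⟩))². Then for every ε > 0 and every w in the closed ball of radius W centered at the origin, err_m is (ε, e^W, w*)-SLQC at w. -/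
open RealInnerProductSpace

noncomputable def sigmoid (z : ℝ) : ℝ := 1 / (1 + Real.exp (-z))

/-!
The sigmoid is increasing and `1/4`-Lipschitz, hence `4 (σ b - σ a)² ≤ (σ b - σ a)(b - a)`, and
on `[-W, W]` its derivative `σ (1 - σ)` is at least `e^{-W}/4`. Summing over the sample, the
gradient `g` of the realizable square loss at `w` satisfies `⟪g, w* - w⟫ ≤ -2 e^{-W} err(w)`, while
`‖g‖ ≤ 1/2`. So if `err(w) > ε`, moving the target `w*` by at most `ε e^{-W}` changes
`⟪g, · - w⟫` by at most `ε e^{-W}/2`, which cannot make it positive.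
-/

open scoped NNReal

theorem sigmoid_eq_real_sigmoid : sigmoid = Real.sigmoid := by
  funext z; rw [sigmoid, Real.sigmoid_def, one_div]

theorem Monotone.sq_sub_le_of_lipschitzWith {f : ℝ → ℝ} {L : ℝ≥0} (hmono : Monotone f)
    (hlip : LipschitzWith L f) (a b : ℝ) :
    (f b - f a) ^ 2 ≤ L * ((f b - f a) * (b - a)) := by
  have hdist : |f b - f a| ≤ L * |b - a| := by
    simpa only [Real.dist_eq] using hlip.dist_le_mul b a
  have hsign : 0 ≤ (f b - f a) * (b - a) := by
    rcases le_total a b with hab | hba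
    · exact mul_nonneg (sub_nonneg.2 (hmono hab)) (sub_nonneg.2 hab)
    · exact mul_nonneg_of_nonpos_of_nonpos (sub_nonpos.2 (hmono hba)) (sub_nonpos.2 hba)
  calc (f b - f a) ^ 2 = |f b - f a| * |f b - f a| := by rw [sq, abs_mul_abs_self]
    _ ≤ |f b - f a| * (L * |b - a|) := by gcongr
    _ = L * ((f b - f a) * (b - a)) := by rw [mul_left_comm, ← abs_mul, abs_of_nonneg hsign]

namespace Real

theorem sigmoid_mul_one_sub_le (x : ℝ) : sigmoid x * (1 - sigmoid x) ≤ 4⁻¹ := by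
  nlinarith [sq_nonneg (2 * sigmoid x - 1)]

theorem sigmoid_mul_one_sub_nonneg (x : ℝ) : 0 ≤ sigmoid x * (1 - sigmoid x) :=
  mul_nonneg (sigmoid_nonneg x) (sub_nonneg.2 (sigmoid_le_one x))

theorem lipschitzWith_sigmoid : LipschitzWith 4⁻¹ sigmoid := by
  refine lipschitzWith_of_nnnorm_deriv_le (fun x => (hasDerivAt_sigmoid x).differentiableAt)
    fun x => ?_
  rw [← NNReal.coe_le_coe, coe_nnnorm, deriv_sigmoid, Real.norm_eq_abs,
    abs_of_nonneg (sigmoid_mul_one_sub_nonneg x)]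
  simpa using sigmoid_mul_one_sub_le x

theorem sq_sigmoid_sub_le (a b : ℝ) :
    4 * (sigmoid b - sigmoid a) ^ 2 ≤ (sigmoid b - sigmoid a) * (b - a) := by
  have h := sigmoid_monotone.sq_sub_le_of_lipschitzWith lipschitzWith_sigmoid a b
  push_cast at h
  linarith

theorem exp_neg_abs_div_four_le_sigmoid_mul_one_sub (x : ℝ) :
    exp (-|x|) / 4 ≤ sigmoid x * (1 - sigmoid x) := by
  have hsymm : sigmoid x * (1 - sigmoid x) = sigmoid |x| * (1 - sigmoid |x|) := by
    rcases abs_choice x with h | h <;> rw [h]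
    rw [sigmoid_neg, sub_sub_cancel, mul_comm]
  have hhalf : 2⁻¹ ≤ sigmoid |x| := sigmoid_zero ▸ sigmoid_le (abs_nonneg x)
  rw [hsymm, ← sigmoid_neg, ← sigmoid_mul_rexp_neg]
  calc exp (-|x|) / 4 = 2⁻¹ * (2⁻¹ * exp (-|x|)) := by ring
    _ ≤ sigmoid |x| * (sigmoid |x| * exp (-|x|)) := by gcongr

theorem sigmoid_mul_sub_mul_deriv_le {a b W : ℝ} (ha : |a| ≤ W) :
    2 * (sigmoid a - sigmoid b) * (sigmoid a * (1 - sigmoid a)) * (b - a)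
      ≤ -(2 * exp (-W)) * (sigmoid a - sigmoid b) ^ 2 := by
  have hcocoercive := sq_sigmoid_sub_le b a
  have hderiv : exp (-W) / 4 ≤ sigmoid a * (1 - sigmoid a) :=
    le_trans (by gcongr) (exp_neg_abs_div_four_le_sigmoid_mul_one_sub a)
  nlinarith [mul_le_mul_of_nonneg_left hcocoercive (sigmoid_mul_one_sub_nonneg a),
    mul_le_mul_of_nonneg_right hderiv (sq_nonneg (sigmoid a - sigmoid b))]

theorem abs_sigmoid_sub_mul_deriv_le (a b : ℝ) :
    |2 * (sigmoid a - sigmoid b) * (sigmoid a * (1 - sigmoid a))| ≤ 2⁻¹ := by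
  have hdiff : |sigmoid a - sigmoid b| ≤ 1 := by
    rw [abs_le]
    constructor <;> linarith [sigmoid_pos a, sigmoid_pos b, sigmoid_lt_one a, sigmoid_lt_one b]
  rw [abs_mul, abs_mul, abs_two, abs_of_nonneg (sigmoid_mul_one_sub_nonneg a)]
  calc 2 * |sigmoid a - sigmoid b| * (sigmoid a * (1 - sigmoid a)) ≤ 2 * 1 * 4⁻¹ :=
        mul_le_mul (by gcongr) (sigmoid_mul_one_sub_le a) (sigmoid_mul_one_sub_nonneg a)
          (by norm_num)
    _ = 2⁻¹ := by norm_num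

theorem hasDerivAt_sq_sub_sigmoid (y a : ℝ) :
    HasDerivAt (fun t => (y - sigmoid t) ^ 2)
      (2 * (sigmoid a - y) * (sigmoid a * (1 - sigmoid a))) a :=
  (((hasDerivAt_sigmoid a).const_sub y).fun_pow 2).congr_deriv (by norm_num; ring)

end Real

section SigmoidLoss

variable {ι E : Type*} [Fintype ι] [NormedAddCommGroup E] [InnerProductSpace ℝ E]

noncomputable def sigmoidLoss (x : ι → E) (y : ι → ℝ) (w : E) : ℝ :=
  1 / (Fintype.card ι : ℝ) * ∑ i, (y i - Real.sigmoid ⟪w, x i⟫) ^ 2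

theorem sigmoidLoss_self (x : ι → E) (z : E) :
    sigmoidLoss x (fun i => Real.sigmoid ⟪z, x i⟫) z = 0 := by
  simp [sigmoidLoss]

theorem hasFDerivAt_inner_left [CompleteSpace E] (a w : E) :
    HasFDerivAt (fun v => ⟪v, a⟫) (InnerProductSpace.toDual ℝ E a) w :=
  (InnerProductSpace.toDual ℝ E a).hasFDerivAt.congr_of_eventuallyEq
    (Filter.Eventually.of_forall fun v => (real_inner_comm a v).trans (InnerProductSpace.toDual_apply_apply ..).symm)

theorem gradient_sigmoidLoss [CompleteSpace E] (x : ι → E) (y : ι → ℝ) (w : E) :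
    gradient (sigmoidLoss x y) w = (1 / (Fintype.card ι : ℝ)) • ∑ i,
      (2 * (Real.sigmoid ⟪w, x i⟫ - y i) *
        (Real.sigmoid ⟪w, x i⟫ * (1 - Real.sigmoid ⟪w, x i⟫))) • x i := by
  refine HasGradientAt.gradient ?_
  rw [hasGradientAt_iff_hasFDerivAt]
  have hterm := fun i (_ : i ∈ Finset.univ) =>
    (Real.hasDerivAt_sq_sub_sigmoid (y i) ⟪w, x i⟫).comp_hasFDerivAt w
      (hasFDerivAt_inner_left (x i) w)
  refine ((HasFDerivAt.fun_sum hterm).const_mul (1 / (Fintype.card ι : ℝ))).congr_fderiv ?_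
  simp only [map_smulₛₗ, map_sum, starRingEnd_apply, star_trivial]

theorem inner_gradient_sigmoidLoss_sub_le [CompleteSpace E] {x : ι → E} {z w : E} {W : ℝ}
    (hxw : ∀ i, |⟪w, x i⟫| ≤ W) :
    ⟪gradient (sigmoidLoss x fun i => Real.sigmoid ⟪z, x i⟫) w, z - w⟫
      ≤ -(2 * Real.exp (-W)) * sigmoidLoss x (fun i => Real.sigmoid ⟪z, x i⟫) w := by
  have hterm : ∀ i, ⟪(2 * (Real.sigmoid ⟪w, x i⟫ - Real.sigmoid ⟪z, x i⟫) *
        (Real.sigmoid ⟪w, x i⟫ * (1 - Real.sigmoid ⟪w, x i⟫))) • x i, z - w⟫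
      ≤ -(2 * Real.exp (-W)) * (Real.sigmoid ⟪z, x i⟫ - Real.sigmoid ⟪w, x i⟫) ^ 2 := fun i => by
    rw [real_inner_smul_left, inner_sub_right, real_inner_comm z, real_inner_comm w]
    exact (Real.sigmoid_mul_sub_mul_deriv_le (hxw i)).trans_eq (by ring)
  calc _ ≤ 1 / (Fintype.card ι : ℝ) *
        ∑ i, -(2 * Real.exp (-W)) * (Real.sigmoid ⟪z, x i⟫ - Real.sigmoid ⟪w, x i⟫) ^ 2 := by
        rw [gradient_sigmoidLoss, real_inner_smul_left, sum_inner]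
        gcongr with i
        exact hterm i
    _ = _ := by
        simp only [sigmoidLoss, Finset.mul_sum]
        exact Finset.sum_congr rfl fun i _ => by ring

theorem norm_gradient_sigmoidLoss_le [CompleteSpace E] {x : ι → E} (hx : ∀ i, ‖x i‖ ≤ 1)
    (z w : E) : ‖gradient (sigmoidLoss x fun i => Real.sigmoid ⟪z, x i⟫) w‖ ≤ 2⁻¹ := by
  have hterm : ∀ i, ‖(2 * (Real.sigmoid ⟪w, x i⟫ - Real.sigmoid ⟪z, x i⟫) *
      (Real.sigmoid ⟪w, x i⟫ * (1 - Real.sigmoid ⟪w, x i⟫))) • x i‖ ≤ 2⁻¹ := fun i => by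
    rw [norm_smul, Real.norm_eq_abs]
    exact mul_le_of_le_one_right (by norm_num) (hx i) |>.trans'
      (mul_le_mul_of_nonneg_right (Real.abs_sigmoid_sub_mul_deriv_le _ _) (norm_nonneg _))
  set n := (Fintype.card ι : ℝ)
  calc _ ≤ 1 / n * ∑ i : ι, (2⁻¹ : ℝ) := by
        rw [gradient_sigmoidLoss, norm_smul, Real.norm_of_nonneg (by positivity)]
        gcongr
        exact (norm_sum_le _ _).trans (Finset.sum_le_sum fun i _ => hterm i)
    _ = n / n * 2⁻¹ := by simp [n]; ring
    _ ≤ 2⁻¹ := mul_le_of_le_one_left (by norm_num) (div_self_le_one n)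

end SigmoidLoss

theorem inner_sub_nonpos_of_mem_closedBall {E : Type*} [NormedAddCommGroup E]
    [InnerProductSpace ℝ E] {g z w v : E} {r : ℝ} (h : ⟪g, z - w⟫ + ‖g‖ * r ≤ 0)
    (hv : v ∈ Metric.closedBall z r) : ⟪g, v - w⟫ ≤ 0 := by
  have hsplit : v - w = (z - w) + (v - z) := by abel
  have hball : ‖g‖ * ‖v - z‖ ≤ ‖g‖ * r := by
    gcongr
    rwa [← dist_eq_norm]
  rw [hsplit, inner_add_right]
  linarith [real_inner_le_norm g (v - z)]

theorem stmt_8_general {d m : ℕ} (W : ℝ)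
    (x : Fin m → EuclideanSpace ℝ (Fin d)) (hx : ∀ i, ‖x i‖ ≤ 1)
    (wstar : EuclideanSpace ℝ (Fin d))
    (y : Fin m → ℝ) (hy : ∀ i, y i = sigmoid ⟪wstar, x i⟫)
    (err : EuclideanSpace ℝ (Fin d) → ℝ)
    (herr : ∀ w, err w = (1 / (m : ℝ)) * ∑ i, (y i - sigmoid ⟪w, x i⟫) ^ 2)
    (ε : ℝ) (hε : 0 < ε) (w : EuclideanSpace ℝ (Fin d)) (hw : w ∈ Metric.closedBall 0 W) :
    err w - err wstar ≤ ε ∨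
      (gradient err w ≠ 0 ∧
        ∀ v ∈ Metric.closedBall wstar (ε / Real.exp W), ⟪gradient err w, v - w⟫ ≤ 0) := by
  obtain rfl : err = sigmoidLoss x fun i => Real.sigmoid ⟪wstar, x i⟫ := by
    funext v
    simp [herr, hy, sigmoidLoss, sigmoid_eq_real_sigmoid]
  rw [sigmoidLoss_self, sub_zero]
  refine (le_or_gt _ ε).imp_right fun hlt => ?_
  have hxw : ∀ i, |⟪w, x i⟫| ≤ W := fun i =>
    (abs_real_inner_le_norm _ _).trans <| (mul_le_of_le_one_right (norm_nonneg _) (hx i)).trans <|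
      mem_closedBall_zero_iff.1 hw
  have hdescent := inner_gradient_sigmoidLoss_sub_le (z := wstar) hxw
  have hnorm := norm_gradient_sigmoidLoss_le hx wstar w
  have hexp := Real.exp_pos (-W)
  have hgap := mul_lt_mul_of_pos_left hlt hexp
  refine ⟨fun hzero => ?_, fun v hv => inner_sub_nonpos_of_mem_closedBall ?_ hv⟩
  · rw [hzero, inner_zero_left] at hdescent
    linarith [mul_pos hexp hε]
  · rw [div_eq_mul_inv, ← Real.exp_neg]
    nlinarith [mul_le_mul_of_nonneg_right hnorm (mul_pos hε hexp).le]

theorem stmt_8 {d m : ℕ} (W : ℝ) (hW : 0 < W)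
    (x : Fin m → EuclideanSpace ℝ (Fin d)) (hx : ∀ i, ‖x i‖ ≤ 1)
    (wstar : EuclideanSpace ℝ (Fin d)) (hwstar : ‖wstar‖ ≤ W)
    (y : Fin m → ℝ) (hy : ∀ i, y i = sigmoid ⟪wstar, x i⟫)
    (err : EuclideanSpace ℝ (Fin d) → ℝ)
    (herr : ∀ w, err w = (1 / (m : ℝ)) * ∑ i, (y i - sigmoid ⟪w, x i⟫) ^ 2)
    (ε : ℝ) (hε : 0 < ε) (w : EuclideanSpace ℝ (Fin d)) (hw : w ∈ Metric.closedBall 0 W) :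
    err w - err wstar ≤ ε ∨
      (gradient err w ≠ 0 ∧
        ∀ v ∈ Metric.closedBall wstar (ε / Real.exp W), ⟪gradient err w, v - w⟫ ≤ 0) :=
  stmt_8_general W x hx wstar y hy err herr ε hε w hw
end

section
/- In ℝ², let x₁ = (0, −log 4), x₂ = (−log 4, 0), y₁ = y₂ = 1/5, and define err(w) = (1/2)·(1/5 − σ(⟨w, x₁⟩))² + (1/2)·(1/5 − σ(⟨w, x₂⟩))², where σ(z) = 1/(1 + e^{−z}). Then for w₁ = (3,1) and w₂ = (1,3) one has err(w₁) = err(w₂) ≤ 0.018 while err(w₁/2 + w₂/2) ≥ 0.019; in particular the 0.018-sublevel set of err is not convex, so err is not quasi-convex. -/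
/-! With `σ(-n log 4) = 1/(1 + 4ⁿ)`, the error at a point `(a, b)` with natural coordinates is an
explicit rational number: `err(3,1) = err(1,3) = (12/65)²/2 ≈ 0.0170`, while at the midpoint
`err(2,2) = (12/85)² ≈ 0.0199`. -/

open RealInnerProductSpace

noncomputable def sigmoid9 (z : ℝ) : ℝ := 1 / (1 + Real.exp (-z))

noncomputable def vec9 (a b : ℝ) : EuclideanSpace ℝ (Fin 2) :=
  (WithLp.equiv 2 (Fin 2 → ℝ)).symm ![a, b]

noncomputable def err9 (w : EuclideanSpace ℝ (Fin 2)) : ℝ :=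
  (1 / 2) * (1 / 5 - sigmoid9 ⟪w, vec9 0 (-Real.log 4)⟫) ^ 2 +
    (1 / 2) * (1 / 5 - sigmoid9 ⟪w, vec9 (-Real.log 4) 0⟫) ^ 2

lemma inner_vec9 (a b c d : ℝ) : ⟪vec9 a b, vec9 c d⟫ = a * c + b * d := by
  simp [vec9, PiLp.inner_apply, Fin.sum_univ_two]
  ring

lemma smul_add_smul_vec9 (s t a b c d : ℝ) :
    s • vec9 a b + t • vec9 c d = vec9 (s * a + t * c) (s * b + t * d) := by
  apply (WithLp.equiv 2 (Fin 2 → ℝ)).injective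
  ext i
  fin_cases i <;> simp [vec9]

lemma sigmoid9_neg_natCast_mul_log {x : ℝ} (hx : 0 < x) (n : ℕ) :
    sigmoid9 (-(n * Real.log x)) = 1 / (1 + x ^ n) := by
  rw [sigmoid9, neg_neg, Real.exp_nat_mul, Real.exp_log hx]

lemma err9_vec9_natCast (a b : ℕ) :
    err9 (vec9 a b) =
      1 / 2 * (1 / 5 - 1 / (1 + 4 ^ b)) ^ 2 + 1 / 2 * (1 / 5 - 1 / (1 + 4 ^ a)) ^ 2 := by
  have h₁ : ⟪vec9 a b, vec9 0 (-Real.log 4)⟫ = -(b * Real.log 4) := by rw [inner_vec9]; ring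
  have h₂ : ⟪vec9 a b, vec9 (-Real.log 4) 0⟫ = -(a * Real.log 4) := by rw [inner_vec9]; ring
  rw [err9, h₁, h₂, sigmoid9_neg_natCast_mul_log four_pos,
    sigmoid9_neg_natCast_mul_log four_pos]

lemma err9_vec9_three_one : err9 (vec9 3 1) = 72 / 4225 := by
  simpa using (err9_vec9_natCast 3 1).trans (by norm_num)

lemma err9_vec9_one_three : err9 (vec9 1 3) = 72 / 4225 := by
  simpa using (err9_vec9_natCast 1 3).trans (by norm_num)

lemma err9_vec9_two_two : err9 (vec9 2 2) = 144 / 7225 := by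
  simpa using (err9_vec9_natCast 2 2).trans (by norm_num)

lemma not_convex_setOf_le_of_midpoint {E : Type*} [AddCommGroup E] [Module ℝ E] {f : E → ℝ}
    {c : ℝ} {x y : E} (hx : f x ≤ c) (hy : f y ≤ c)
    (hmid : c < f ((1 / 2 : ℝ) • x + (1 / 2 : ℝ) • y)) :
    ¬ Convex ℝ {w | f w ≤ c} := fun hconv =>
  (hconv hx hy (by norm_num) (by norm_num) (by norm_num)).not_gt hmid

theorem stmt_9 :
    err9 (vec9 3 1) = err9 (vec9 1 3) ∧
      err9 (vec9 3 1) ≤ 0.018 ∧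
      err9 ((1 / 2 : ℝ) • vec9 3 1 + (1 / 2 : ℝ) • vec9 1 3) ≥ 0.019 ∧
      ¬ Convex ℝ {w : EuclideanSpace ℝ (Fin 2) | err9 w ≤ 0.018} := by
  have hmid : err9 ((1 / 2 : ℝ) • vec9 3 1 + (1 / 2 : ℝ) • vec9 1 3) = 144 / 7225 := by
    rw [smul_add_smul_vec9, ← err9_vec9_two_two]
    norm_num
  refine ⟨by rw [err9_vec9_three_one, err9_vec9_one_three], by rw [err9_vec9_three_one]; norm_num,
    by rw [hmid]; norm_num, ?_⟩
  exact not_convex_setOf_le_of_midpoint (by rw [err9_vec9_three_one]; norm_num)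
    (by rw [err9_vec9_one_three]; norm_num) (by rw [hmid]; norm_num)
end

section
/- Let ε > 0 and G > 0. Let f : ℝ^d → ℝ be differentiable and strictly-quasi-convex, let x* be a global minimizer of f, and assume f is (G, ε/G, x*)-locally-Lipschitz. Then f is (ε, G, x*)-SLQC at every x ∈ ℝ^d. -/
/-!
The Lipschitz bound puts the whole ball of radius `ε / G` around `x*` inside the sublevel set
`{f ≤ f x* + ε}`, which lies strictly below `f x` when `f x - f x* > ε`; quasi-convexity then gives
`⟪∇f x, y - x⟫ ≤ 0` for every `y` in the ball, and strict quasi-convexity gives `∇f x ≠ 0`.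
-/

open RealInnerProductSpace Metric

theorem le_add_of_abs_sub_le_mul_norm_on_closedBall {E : Type*} [SeminormedAddCommGroup E]
    {f : E → ℝ} {z y : E} {ε G : ℝ} (hG : 0 < G)
    (hlip : ∀ u ∈ closedBall z (ε / G), ∀ v ∈ closedBall z (ε / G), |f u - f v| ≤ G * ‖u - v‖)
    (hy : y ∈ closedBall z (ε / G)) :
    f y ≤ f z + ε := by
  have hz : z ∈ closedBall z (ε / G) := mem_closedBall_self (dist_nonneg.trans hy)
  have hdist : ‖y - z‖ ≤ ε / G := by rwa [← dist_eq_norm]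
  calc f y ≤ f z + G * ‖y - z‖ := by linarith [(abs_le.mp (hlip y hy z hz)).2]
    _ ≤ f z + G * (ε / G) := by gcongr
    _ = f z + ε := by field_simp

theorem stmt_16_general {d : ℕ} (ε G : ℝ) (hε : 0 < ε) (hG : 0 < G)
    (f : EuclideanSpace ℝ (Fin d) → ℝ)
    (hqc : ∀ x y : EuclideanSpace ℝ (Fin d), f y ≤ f x → ⟪gradient f x, y - x⟫ ≤ 0)
    (hstrict : ∀ y : EuclideanSpace ℝ (Fin d), f y > ⨅ z, f z → gradient f y ≠ 0)
    (xstar : EuclideanSpace ℝ (Fin d)) (hmin : ∀ y, f xstar ≤ f y)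
    (hlip : ∀ u ∈ Metric.closedBall xstar (ε / G), ∀ v ∈ Metric.closedBall xstar (ε / G),
      |f u - f v| ≤ G * ‖u - v‖) :
    ∀ x : EuclideanSpace ℝ (Fin d),
      f x - f xstar ≤ ε ∨
        (gradient f x ≠ 0 ∧
          ∀ y ∈ Metric.closedBall xstar (ε / G), ⟪gradient f x, y - x⟫ ≤ 0) := by
  intro x
  refine or_iff_not_imp_left.mpr fun hx => ?_
  rw [not_le] at hx
  have hinf : ⨅ z, f z = f xstar :=
    ciInf_eq_of_forall_ge_of_forall_gt_exists_lt hmin fun _ hw => ⟨xstar, hw⟩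
  refine ⟨hstrict x (by rw [hinf]; linarith), fun y hy => hqc x y ?_⟩
  linarith [le_add_of_abs_sub_le_mul_norm_on_closedBall hG hlip hy]

theorem stmt_16 {d : ℕ} (ε G : ℝ) (hε : 0 < ε) (hG : 0 < G)
    (f : EuclideanSpace ℝ (Fin d) → ℝ) (hf : Differentiable ℝ f)
    (hqc : ∀ x y : EuclideanSpace ℝ (Fin d), f y ≤ f x → ⟪gradient f x, y - x⟫ ≤ 0)
    (hstrict : ∀ y : EuclideanSpace ℝ (Fin d), f y > ⨅ z, f z → gradient f y ≠ 0)
    (xstar : EuclideanSpace ℝ (Fin d)) (hmin : ∀ y, f xstar ≤ f y)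
    (hlip : ∀ u ∈ Metric.closedBall xstar (ε / G), ∀ v ∈ Metric.closedBall xstar (ε / G),
      |f u - f v| ≤ G * ‖u - v‖) :
    ∀ x : EuclideanSpace ℝ (Fin d),
      f x - f xstar ≤ ε ∨
        (gradient f x ≠ 0 ∧
          ∀ y ∈ Metric.closedBall xstar (ε / G), ⟪gradient f x, y - x⟫ ≤ 0) :=
  stmt_16_general ε G hε hG f hqc hstrict xstar hmin hlip
end

section
/- Let ε > 0 and β > 0, let f : ℝ^d → ℝ be differentiable, and let x* be a global minimizer of f. Assume f is (β, √(2ε/β), x*)-locally-smooth. Then for every x ∈ ℝ^d with f(x) − f(x*) > ε, the closed ball of radius √(2ε/β) centered at x* is contained in the sublevel set S_f(x) = {y ∈ ℝ^d : f(y) ≤ f(x)}. -/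
/-!
At a global minimizer `x*` the gradient vanishes, so local smoothness at `x*` reduces to the
quadratic upper bound `f y ≤ f x* + β/2 ‖y - x*‖²`. On the ball of radius `√(2ε/β)` the
quadratic term is at most `ε < f x - f x*`.
-/

open RealInnerProductSpace

theorem IsLocalMin.gradient_eq_zero {F : Type*} [NormedAddCommGroup F] [InnerProductSpace ℝ F]
    [CompleteSpace F] {f : F → ℝ} {a : F} (h : IsLocalMin f a) : gradient f a = 0 := by
  simp [gradient, h.fderiv_eq_zero]

theorem IsLocalMin.le_add_of_abs_sub_inner_gradient_le {F : Type*} [NormedAddCommGroup F]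
    [InnerProductSpace ℝ F] [CompleteSpace F] {f : F → ℝ} {a y : F} {C : ℝ}
    (h : IsLocalMin f a) (hC : |f a - f y - ⟪gradient f a, y - a⟫| ≤ C) : f y ≤ f a + C := by
  rw [h.gradient_eq_zero, inner_zero_left, sub_zero] at hC
  linarith [neg_abs_le (f a - f y)]

theorem mul_sq_le_of_le_sqrt {ε β r : ℝ} (hε : 0 ≤ ε) (hβ : 0 < β) (hr₀ : 0 ≤ r)
    (hr : r ≤ Real.sqrt (2 * ε / β)) : β / 2 * r ^ 2 ≤ ε := by
  have hsq : r ^ 2 ≤ 2 * ε / β := by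
    calc r ^ 2 ≤ Real.sqrt (2 * ε / β) ^ 2 := by gcongr
      _ = 2 * ε / β := Real.sq_sqrt (by positivity)
  calc β / 2 * r ^ 2 ≤ β / 2 * (2 * ε / β) := by gcongr
    _ = ε := by field_simp

theorem stmt_17_general {d : ℕ} (ε β : ℝ) (hε : 0 < ε) (hβ : 0 < β)
    (f : EuclideanSpace ℝ (Fin d) → ℝ)
    (xstar : EuclideanSpace ℝ (Fin d)) (hmin : ∀ y, f xstar ≤ f y)
    (hsmooth : ∀ u ∈ Metric.closedBall xstar (Real.sqrt (2 * ε / β)),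
      ∀ v ∈ Metric.closedBall xstar (Real.sqrt (2 * ε / β)),
        |f v - f u - ⟪gradient f v, u - v⟫| ≤ β / 2 * ‖u - v‖ ^ 2)
    (x : EuclideanSpace ℝ (Fin d)) (hx : f x - f xstar > ε) :
    Metric.closedBall xstar (Real.sqrt (2 * ε / β)) ⊆
      {y : EuclideanSpace ℝ (Fin d) | f y ≤ f x} := by
  intro y hy
  have hlocal : IsLocalMin f xstar := Filter.Eventually.of_forall hmin
  have hcenter : xstar ∈ Metric.closedBall xstar (Real.sqrt (2 * ε / β)) :=
    Metric.mem_closedBall_self (Real.sqrt_nonneg _)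
  have hquad : f y ≤ f xstar + β / 2 * ‖y - xstar‖ ^ 2 :=
    hlocal.le_add_of_abs_sub_inner_gradient_le (hsmooth y hy xstar hcenter)
  have hsmall : β / 2 * ‖y - xstar‖ ^ 2 ≤ ε :=
    mul_sq_le_of_le_sqrt hε.le hβ (norm_nonneg _) (by rwa [← dist_eq_norm])
  show f y ≤ f x
  linarith

theorem stmt_17 {d : ℕ} (ε β : ℝ) (hε : 0 < ε) (hβ : 0 < β)
    (f : EuclideanSpace ℝ (Fin d) → ℝ) (hf : Differentiable ℝ f)
    (xstar : EuclideanSpace ℝ (Fin d)) (hmin : ∀ y, f xstar ≤ f y)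
    (hsmooth : ∀ u ∈ Metric.closedBall xstar (Real.sqrt (2 * ε / β)),
      ∀ v ∈ Metric.closedBall xstar (Real.sqrt (2 * ε / β)),
        |f v - f u - ⟪gradient f v, u - v⟫| ≤ β / 2 * ‖u - v‖ ^ 2)
    (x : EuclideanSpace ℝ (Fin d)) (hx : f x - f xstar > ε) :
    Metric.closedBall xstar (Real.sqrt (2 * ε / β)) ⊆
      {y : EuclideanSpace ℝ (Fin d) | f y ≤ f x} :=
  stmt_17_general ε β hε hβ f xstar hmin hsmooth x hx
end

section
/- Let γ > 0, let x_1, …, x_m be points in the closed unit ball of ℝ^d, and let w* ∈ ℝ^d satisfy |⟨w*, x_i⟩| ≥ γ for all i. Let φ(z) = 1 if z ≥ 0 and φ(z) = 0 otherwise, and set y_i = φ(⟨w*, x_i⟩). Define err_m(w) = (1/m)·Σ_{i=1}^m (y_i − φ(⟨w, x_i⟩))² and the direction oracle 𝒢(w) = (1/m)·Σ_{i=1}^m (φ(⟨w, x_i⟩) − y_i)·x_i. Then for every ε ∈ (0,1) and every w ∈ ℝ^d: either err_m(w) − err_m(w*) ≤ ε, or else ‖𝒢(w)‖ > 0 and ⟨𝒢(w),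 v − w⟩ ≤ 0 for every v in the closed ball of radius γε/2 centered at w*. (That is, err_m is (ε, 2/γ, w*)-SLQC at w with respect to the direction oracle 𝒢.) -/
open RealInnerProductSpace Classical

noncomputable def phi18 (z : ℝ) : ℝ := if z ≥ 0 then 1 else 0

/-! Every `v` within distance `< γ` of `w*` classifies each sample like `w*` does, by the margin
condition. Hence each summand `(φ⟨w, xᵢ⟩ - φ⟨w*, xᵢ⟩) (⟨v, xᵢ⟩ - ⟨w, xᵢ⟩)` of `m ⟪𝒢 w, v - w⟫` is
nonpositive, and strictly negative at a sample misclassified by `w`; such a sample exists as soon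
as `err w > ε > 0 = err w*`. Taking `v = w*` also gives `𝒢 w ≠ 0`. -/

lemma phi18_sub_mul_sub_nonpos {a b c : ℝ} (hbc : 0 < b * c) :
    (phi18 a - phi18 b) * (c - a) ≤ 0 := by
  unfold phi18
  split_ifs <;> nlinarith

lemma phi18_sub_mul_sub_neg {a b c : ℝ} (hbc : 0 < b * c) (hab : phi18 a ≠ phi18 b) :
    (phi18 a - phi18 b) * (c - a) < 0 := by
  unfold phi18 at *
  split_ifs at * <;> first | exact absurd rfl hab | nlinarith

lemma mul_pos_of_abs_sub_lt_abs {b c : ℝ} (h : |c - b| < |b|) : 0 < b * c := by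
  rcases abs_cases b with ⟨hb, _⟩ | ⟨hb, _⟩ <;>
    rcases abs_cases (c - b) with ⟨hcb, _⟩ | ⟨hcb, _⟩ <;> rw [hb, hcb] at h <;> nlinarith

section InnerProductSpace

variable {E : Type*} [NormedAddCommGroup E] [InnerProductSpace ℝ E]

lemma inner_mul_inner_pos_of_mem_closedBall {u v x : E} {γ r : ℝ} (hx : ‖x‖ ≤ 1)
    (hu : γ ≤ |⟪u, x⟫|) (hr : r < γ) (hv : v ∈ Metric.closedBall u r) :
    0 < ⟪u, x⟫ * ⟪v, x⟫ := by
  refine mul_pos_of_abs_sub_lt_abs (lt_of_lt_of_le ?_ hu)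
  calc |⟪v, x⟫ - ⟪u, x⟫| = |⟪v - u, x⟫| := by rw [inner_sub_left]
    _ ≤ ‖v - u‖ * ‖x‖ := abs_real_inner_le_norm _ _
    _ ≤ r * 1 := mul_le_mul (dist_eq_norm v u ▸ hv) hx (norm_nonneg _)
        (Metric.nonempty_closedBall.1 ⟨v, hv⟩)
    _ < γ := by linarith

lemma inner_sum_smul_sub_neg {ι : Type*} [Fintype ι] {x : ι → E} {u v w : E}
    (hsign : ∀ i, 0 < ⟪u, x i⟫ * ⟪v, x i⟫) (hmis : ∃ i, phi18 ⟪w, x i⟫ ≠ phi18 ⟪u, x i⟫) :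
    ⟪∑ i, (phi18 ⟪w, x i⟫ - phi18 ⟪u, x i⟫) • x i, v - w⟫ < 0 := by
  have hterm : ∀ i, ⟪(phi18 ⟪w, x i⟫ - phi18 ⟪u, x i⟫) • x i, v - w⟫ =
      (phi18 ⟪w, x i⟫ - phi18 ⟪u, x i⟫) * (⟪v, x i⟫ - ⟪w, x i⟫) := fun i => by
    rw [real_inner_smul_left, inner_sub_right, real_inner_comm v, real_inner_comm w]
  rw [sum_inner, Finset.sum_congr rfl fun i _ => hterm i, ← Finset.sum_const_zero]
  obtain ⟨i, hi⟩ := hmis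
  exact Finset.sum_lt_sum (fun j _ => phi18_sub_mul_sub_nonpos (hsign j))
    ⟨i, Finset.mem_univ i, phi18_sub_mul_sub_neg (hsign i) hi⟩

end InnerProductSpace

theorem stmt_18 {d m : ℕ} (γ : ℝ) (hγ : 0 < γ)
    (x : Fin m → EuclideanSpace ℝ (Fin d)) (hx : ∀ i, ‖x i‖ ≤ 1)
    (wstar : EuclideanSpace ℝ (Fin d)) (hmargin : ∀ i, |⟪wstar, x i⟫| ≥ γ)
    (y : Fin m → ℝ) (hy : ∀ i, y i = phi18 ⟪wstar, x i⟫)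
    (err : EuclideanSpace ℝ (Fin d) → ℝ)
    (herr : ∀ w, err w = (1 / (m : ℝ)) * ∑ i, (y i - phi18 ⟪w, x i⟫) ^ 2)
    (G : EuclideanSpace ℝ (Fin d) → EuclideanSpace ℝ (Fin d))
    (hG : ∀ w, G w = (1 / (m : ℝ)) • ∑ i, (phi18 ⟪w, x i⟫ - y i) • x i)
    (ε : ℝ) (hε : ε ∈ Set.Ioo (0 : ℝ) 1) (w : EuclideanSpace ℝ (Fin d)) :
    err w - err wstar ≤ ε ∨
      (‖G w‖ > 0 ∧ ∀ v ∈ Metric.closedBall wstar (γ * ε / 2), ⟪G w, v - w⟫ ≤ 0) := by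
  obtain ⟨hε0, hε1⟩ := hε
  obtain rfl : y = fun i => phi18 ⟪wstar, x i⟫ := funext hy
  rw [or_iff_not_imp_left, not_le]
  intro hgap
  obtain ⟨i, hi⟩ : ∃ i, phi18 ⟪w, x i⟫ ≠ phi18 ⟪wstar, x i⟫ := by
    have hsum : ∑ i, (phi18 ⟪wstar, x i⟫ - phi18 ⟪w, x i⟫) ^ 2 ≠ 0 := fun h => by
      simp only [herr, sub_self, h] at hgap
      norm_num at hgap
      linarith
    obtain ⟨i, -, hi⟩ := Finset.exists_ne_zero_of_sum_ne_zero hsum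
    exact ⟨i, fun h => hi (by rw [h, sub_self, sq, mul_zero])⟩
  have hm : (0 : ℝ) < m := Nat.cast_pos.2 i.pos
  have hneg : ∀ v ∈ Metric.closedBall wstar (γ * ε / 2), ⟪G w, v - w⟫ < 0 := fun v hv => by
    rw [hG, real_inner_smul_left]
    refine mul_neg_of_pos_of_neg (by positivity) (inner_sum_smul_sub_neg (fun j => ?_) ⟨i, hi⟩)
    exact inner_mul_inner_pos_of_mem_closedBall (hx j) (hmargin j) (by nlinarith) hv
  have hwstar := hneg wstar (Metric.mem_closedBall_self (by positivity))
  exact ⟨norm_pos_iff.2 fun h => by simp [h] at hwstar, fun v hv => (hneg v hv).le⟩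
end

section
/- Let f : ℝ^d → ℝ be differentiable, G-Lipschitz, strictly-quasi-convex, and attain its infimum. Then for every ε > 0 and every pair of points x, z ∈ ℝ^d, f is (ε, G, z)-SLQC at x. -/
/-! Outside the ε-sublevel of `z` the gradient cannot vanish, by strict quasi-convexity,
since `f x > f z + ε > min f`. On the other hand, by the Lipschitz bound every point of the
ball of radius `ε / G` around `z` has value at most `f z + ε < f x`, so quasi-convexity at `x`
applies to it. -/

open RealInnerProductSpace

theorem le_add_of_mem_closedBall_of_abs_sub_le {E : Type*} [SeminormedAddCommGroup E]
    {f : E → ℝ} {G ε : ℝ} (hG : 0 < G) {y z : E} (hyz : |f y - f z| ≤ G * ‖y - z‖)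
    (hy : y ∈ Metric.closedBall z (ε / G)) : f y ≤ f z + ε := by
  rw [Metric.mem_closedBall, dist_eq_norm, le_div_iff₀ hG] at hy
  linarith [le_abs_self (f y - f z)]

theorem stmt_19_general {d : ℕ} (G : ℝ) (hG : 0 < G)
    (f : EuclideanSpace ℝ (Fin d) → ℝ)
    (hlip : ∀ x y : EuclideanSpace ℝ (Fin d), |f x - f y| ≤ G * ‖x - y‖)
    (hqc : ∀ x y : EuclideanSpace ℝ (Fin d), f y ≤ f x → ⟪gradient f x, y - x⟫ ≤ 0)
    (hstrict : ∀ y : EuclideanSpace ℝ (Fin d), f y > ⨅ z, f z → gradient f y ≠ 0)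
    (hattain : ∃ xstar : EuclideanSpace ℝ (Fin d), ∀ y, f xstar ≤ f y) :
    ∀ (ε : ℝ), 0 < ε → ∀ x z : EuclideanSpace ℝ (Fin d),
      f x - f z ≤ ε ∨
        (gradient f x ≠ 0 ∧
          ∀ y ∈ Metric.closedBall z (ε / G), ⟪gradient f x, y - x⟫ ≤ 0) := by
  intro ε _ x z
  refine or_iff_not_imp_left.2 fun hxz => ⟨?_, fun y hy => hqc x y ?_⟩
  · obtain ⟨xstar, hxstar⟩ := hattain
    have hinf : ⨅ w, f w = f xstar :=
      ciInf_eq_of_forall_ge_of_forall_gt_exists_lt hxstar fun _ hw => ⟨xstar, hw⟩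
    exact hstrict x (by linarith [hxstar z])
  · linarith [le_add_of_mem_closedBall_of_abs_sub_le hG (hlip y z) hy]

theorem stmt_19 {d : ℕ} (G : ℝ) (hG : 0 < G)
    (f : EuclideanSpace ℝ (Fin d) → ℝ) (hf : Differentiable ℝ f)
    (hlip : ∀ x y : EuclideanSpace ℝ (Fin d), |f x - f y| ≤ G * ‖x - y‖)
    (hqc : ∀ x y : EuclideanSpace ℝ (Fin d), f y ≤ f x → ⟪gradient f x, y - x⟫ ≤ 0)
    (hstrict : ∀ y : EuclideanSpace ℝ (Fin d), f y > ⨅ z, f z → gradient f y ≠ 0)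
    (hattain : ∃ xstar : EuclideanSpace ℝ (Fin d), ∀ y, f xstar ≤ f y) :
    ∀ (ε : ℝ), 0 < ε → ∀ x z : EuclideanSpace ℝ (Fin d),
      f x - f z ≤ ε ∨
        (gradient f x ≠ 0 ∧
          ∀ y ∈ Metric.closedBall z (ε / G), ⟪gradient f x, y - x⟫ ≤ 0) :=
  stmt_19_general G hG f hlip hqc hstrict hattain
end
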